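/- arXiv:2506.21941 — 2 statements merged into one kernel-verified Lean document; each statement's English description precedes it below -/
import Mathlib

section
/- Let n ≥ 2 and let P be a 2-dimensional linear subspace of ℝ^n containing at least 8 roots of Φ_{B_n}. Then P is standard (i.e., spanned by two of the standard basis vectors e_i, e_j), and P contains exactly 8 roots of Φ_{B_n}, of which exactly 4 are long and exactly 4 are short. -/
/-- The `i`-th standard basis vector of `ℝ^n` (Euclidean space). -/
noncomputable def stdBasis (n : ℕ) (i : Fin n) : EuclideanSpace ℝ (Fin n) :=
  EuclideanSpace.single i 1

/-- Short roots of `B_n` : `± e_i`. -/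
def IsShortRoot (n : ℕ) (x : EuclideanSpace ℝ (Fin n)) : Prop :=
  ∃ i : Fin n, x = stdBasis n i ∨ x = -stdBasis n i

/-- Long roots of `B_n` : `± e_i ± e_j` for `i ≠ j`. -/
def IsLongRoot (n : ℕ) (x : EuclideanSpace ℝ (Fin n)) : Prop :=
  ∃ i j : Fin n, i ≠ j ∧ ∃ ε₁ ε₂ : ℝ, (ε₁ = 1 ∨ ε₁ = -1) ∧ (ε₂ = 1 ∨ ε₂ = -1) ∧
    x = ε₁ • stdBasis n i + ε₂ • stdBasis n j

/-- The root system `Φ_{B_n}`. -/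
def PhiB (n : ℕ) : Set (EuclideanSpace ℝ (Fin n)) :=
  {x | IsShortRoot n x ∨ IsLongRoot n x}

/-!
A root of `B_n` has at most two nonzero coordinates. If three coordinates `p, q, s` were nonzero
somewhere on the plane `P`, every root in `P` would lie on one of the three lines
`P ∩ {x_p = 0}`, `P ∩ {x_q = 0}`, `P ∩ {x_s = 0}`, and a line through the origin contains at most
the two roots `±α`: at most 6 roots. So at most two coordinates are nonzero on `P`, and as `P` is
a plane it is spanned by the two corresponding basis vectors `e_i, e_j`. Writing its points as
`a e_i + b e_j`, its roots are those with `(a, b)` one of the 4 points `(±1, 0), (0, ±1)` (short)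
or one of the 4 points `(±1, ±1)` (long).
-/

open Module Submodule

section LinearAlgebra

variable {K V : Type*} [Field K] [AddCommGroup V] [Module K V]

lemma Submodule.eq_span_pair_of_finrank_eq_two {P : Submodule K V} (hP : finrank K P = 2)
    {u v : V} (hu : u ∈ P) (hv : v ∈ P) (hu0 : u ≠ 0) (huv : ∀ a : K, a • u ≠ v) :
    P = span K {u, v} := by
  have hli : LinearIndependent K ![u, v] := (LinearIndependent.pair_iff' hu0).2 huv
  have hrank : finrank K (span K {u, v}) = 2 := by
    have := finrank_span_eq_card hli
    rwa [Matrix.range_cons, Matrix.range_cons_empty, Set.singleton_union, Fintype.card_fin] at this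
  have : FiniteDimensional K P := Module.finite_of_finrank_eq_succ hP
  exact (eq_of_le_of_finrank_le (span_le.2 (Set.insert_subset hu (Set.singleton_subset_iff.2 hv)))
    (by rw [hrank, hP])).symm

lemma Submodule.exists_smul_eq_of_apply_eq_zero {P : Submodule K V} (hP : finrank K P = 2)
    (f : V →ₗ[K] K) {z x y : V} (hz : z ∈ P) (hfz : f z ≠ 0) (hx : x ∈ P) (hx0 : x ≠ 0)
    (hfx : f x = 0) (hy : y ∈ P) (hfy : f y = 0) : ∃ a : K, a • x = y := by
  have hspan : P = span K {x, z} :=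
    eq_span_pair_of_finrank_eq_two hP hx hz hx0 fun a h =>
      hfz (by rw [← h, map_smul, hfx, smul_zero])
  obtain ⟨a, b, rfl⟩ := mem_span_pair.1 (hspan ▸ hy)
  have hb : b = 0 := by simpa [hfx, hfz] using hfy
  exact ⟨a, by rw [hb, zero_smul, add_zero]⟩

end LinearAlgebra

variable {n : ℕ}

lemma stdBasis_apply (i k : Fin n) : stdBasis n i k = if k = i then 1 else 0 := by
  simp [stdBasis, PiLp.single_apply]

namespace PhiB

lemma apply_eq_zero_or_eq_one_or_eq_neg_one {x : EuclideanSpace ℝ (Fin n)} (hx : x ∈ PhiB n)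
    (k : Fin n) : x k = 0 ∨ x k = 1 ∨ x k = -1 := by
  rcases hx with ⟨i, rfl | rfl⟩ | ⟨i, j, hij, ε₁, ε₂, h₁ | h₁, h₂ | h₂, rfl⟩ <;>
    simp [stdBasis_apply] <;> split_ifs <;> grind

lemma exists_apply_ne_zero {x : EuclideanSpace ℝ (Fin n)} (hx : x ∈ PhiB n) :
    ∃ k, x k ≠ 0 := by
  rcases hx with ⟨i, rfl | rfl⟩ | ⟨i, j, hij, ε₁, ε₂, h₁ | h₁, h₂ | h₂, rfl⟩ <;>
    refine ⟨i, ?_⟩ <;> simp_all [stdBasis_apply, Ne.symm]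

lemma ne_zero {x : EuclideanSpace ℝ (Fin n)} (hx : x ∈ PhiB n) : x ≠ 0 := by
  obtain ⟨k, hk⟩ := exists_apply_ne_zero hx
  rintro rfl
  exact hk rfl

lemma apply_eq_zero_of_ne {x : EuclideanSpace ℝ (Fin n)} (hx : x ∈ PhiB n) {p q s : Fin n}
    (hpq : p ≠ q) (hps : p ≠ s) (hqs : q ≠ s) : x p = 0 ∨ x q = 0 ∨ x s = 0 := by
  rcases hx with ⟨i, rfl | rfl⟩ | ⟨i, j, hij, ε₁, ε₂, -, -, rfl⟩ <;>
    simp [stdBasis_apply] <;> grind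

lemma eq_or_eq_neg_of_smul_eq {x y : EuclideanSpace ℝ (Fin n)} (hx : x ∈ PhiB n)
    (hy : y ∈ PhiB n) {a : ℝ} (h : a • x = y) : y = x ∨ y = -x := by
  obtain ⟨k, hk⟩ := exists_apply_ne_zero hx
  have hyk : y k = a * x k := by rw [← h]; rfl
  have ha0 : a ≠ 0 := by rintro rfl; exact ne_zero hy (by rw [← h, zero_smul])
  have ha : a = 1 ∨ a = -1 := by
    rcases apply_eq_zero_or_eq_one_or_eq_neg_one hx k with hxk | hxk | hxk
    · exact absurd hxk hk
    all_goals rcases apply_eq_zero_or_eq_one_or_eq_neg_one hy k with hyk' | hyk' | hyk' <;>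
      rw [hxk, hyk'] at hyk <;>
      first
        | exact absurd (by linarith) ha0
        | exact Or.inl (by linarith)
        | exact Or.inr (by linarith)
  rcases ha with rfl | rfl
  · exact Or.inl (by rw [← h, one_smul])
  · exact Or.inr (by rw [← h, neg_one_smul])

lemma finite : (PhiB n).Finite := by
  refine ((Set.Finite.pi (t := fun _ : Fin n => ({0, 1, -1} : Set ℝ))
    fun _ => Set.toFinite _).image (WithLp.toLp 2)).subset fun x hx => ?_
  exact ⟨x.ofLp, fun k _ => apply_eq_zero_or_eq_one_or_eq_neg_one hx k, rfl⟩

end PhiB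

open Classical in
noncomputable def coordSupport (P : Submodule ℝ (EuclideanSpace ℝ (Fin n))) : Finset (Fin n) :=
  Finset.univ.filter fun k => ∃ x ∈ P, x k ≠ 0

section coordSupport

variable {P : Submodule ℝ (EuclideanSpace ℝ (Fin n))}

lemma mem_coordSupport {k : Fin n} : k ∈ coordSupport P ↔ ∃ x ∈ P, x k ≠ 0 := by
  simp [coordSupport]

lemma le_span_coordSupport (P : Submodule ℝ (EuclideanSpace ℝ (Fin n))) :
    P ≤ span ℝ ((coordSupport P).image (stdBasis n)) := by
  intro x hx
  have hb : ⇑(EuclideanSpace.basisFun (Fin n) ℝ).toBasis = stdBasis n := by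
    ext i : 1; simp [stdBasis]
  rw [Finset.coe_image, ← hb, Basis.mem_span_image]
  intro k hk
  exact mem_coordSupport.2 ⟨x, hx, by simpa using hk⟩

lemma ncard_inter_phiB_apply_eq_zero_le_two (hP : finrank ℝ P = 2) {k : Fin n}
    (hk : k ∈ coordSupport P) : {x ∈ (P : Set _) ∩ PhiB n | x k = 0}.ncard ≤ 2 := by
  obtain ⟨z, hzP, hz⟩ := mem_coordSupport.1 hk
  rcases Set.eq_empty_or_nonempty {x ∈ (P : Set _) ∩ PhiB n | x k = 0} with
    h | ⟨α, ⟨hαP, hαΦ⟩, hαk⟩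
  · rw [h, Set.ncard_empty]; norm_num
  have hsub : {x ∈ (P : Set _) ∩ PhiB n | x k = 0} ⊆ {α, -α} := by
    rintro y ⟨⟨hyP, hyΦ⟩, hyk⟩
    let f : EuclideanSpace ℝ (Fin n) →ₗ[ℝ] ℝ := (EuclideanSpace.proj (𝕜 := ℝ) k).toLinearMap
    obtain ⟨a, ha⟩ := P.exists_smul_eq_of_apply_eq_zero hP f hzP hz hαP (PhiB.ne_zero hαΦ) hαk
      hyP hyk
    exact PhiB.eq_or_eq_neg_of_smul_eq hαΦ hyΦ ha
  calc _ ≤ ({α, -α} : Set _).ncard := Set.ncard_le_ncard hsub (Set.toFinite _)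
    _ ≤ ({-α} : Set _).ncard + 1 := Set.ncard_insert_le _ _
    _ = 2 := by rw [Set.ncard_singleton]

lemma ncard_inter_phiB_le_six (hP : finrank ℝ P = 2) {p q s : Fin n} (hp : p ∈ coordSupport P)
    (hq : q ∈ coordSupport P) (hs : s ∈ coordSupport P) (hpq : p ≠ q) (hps : p ≠ s)
    (hqs : q ≠ s) : ((P : Set _) ∩ PhiB n).ncard ≤ 6 := by
  let roots (k : Fin n) := {x ∈ (P : Set _) ∩ PhiB n | x k = 0}
  have hsub : (P : Set _) ∩ PhiB n ⊆ roots p ∪ roots q ∪ roots s := fun x hx => by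
    rcases PhiB.apply_eq_zero_of_ne hx.2 hpq hps hqs with h | h | h
    exacts [Or.inl (Or.inl ⟨hx, h⟩), Or.inl (Or.inr ⟨hx, h⟩), Or.inr ⟨hx, h⟩]
  have hfin : (roots p ∪ roots q ∪ roots s).Finite :=
    have hroots (k : Fin n) : roots k ⊆ PhiB n := fun _ hx => hx.1.2
    PhiB.finite.subset (Set.union_subset (Set.union_subset (hroots p) (hroots q)) (hroots s))
  calc _ ≤ (roots p ∪ roots q ∪ roots s).ncard := Set.ncard_le_ncard hsub hfin
    _ ≤ (roots p).ncard + (roots q).ncard + (roots s).ncard :=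
      (Set.ncard_union_le _ _).trans (by gcongr; exact Set.ncard_union_le _ _)
    _ ≤ 2 + 2 + 2 := by
      gcongr <;> exact ncard_inter_phiB_apply_eq_zero_le_two hP ‹_›

lemma card_coordSupport_le_two (hP : finrank ℝ P = 2)
    (h8 : 8 ≤ ((P : Set (EuclideanSpace ℝ (Fin n))) ∩ PhiB n).ncard) :
    (coordSupport P).card ≤ 2 := by
  by_contra! h
  obtain ⟨p, hp, q, hq, s, hs, hpq, hps, hqs⟩ := Finset.two_lt_card.1 h
  have := ncard_inter_phiB_le_six hP hp hq hs hpq hps hqs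
  omega

lemma exists_eq_span_stdBasis_of_le_ncard (hP : finrank ℝ P = 2)
    (h8 : 8 ≤ ((P : Set (EuclideanSpace ℝ (Fin n))) ∩ PhiB n).ncard) :
    ∃ i j : Fin n, i ≠ j ∧ P = span ℝ {stdBasis n i, stdBasis n j} := by
  have hle := le_span_coordSupport P
  have hcard := card_coordSupport_le_two hP h8
  have h2 : 2 ≤ (coordSupport P).card :=
    hP ▸ (finrank_mono hle).trans ((finrank_span_finset_le_card _).trans Finset.card_image_le)
  obtain ⟨i, j, hij, hT⟩ := Finset.card_eq_two.1 (le_antisymm hcard h2)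
  rw [hT, Finset.image_insert, Finset.image_singleton, Finset.coe_pair] at hle
  refine ⟨i, j, hij, eq_of_le_of_finrank_le hle ?_⟩
  rw [hP]
  exact (finrank_span_le_card _).trans (by simpa using Finset.card_le_two)

end coordSupport

section StandardPlane

variable {i j : Fin n}

noncomputable def planeVec (i j : Fin n) (p : ℝ × ℝ) : EuclideanSpace ℝ (Fin n) :=
  p.1 • stdBasis n i + p.2 • stdBasis n j

lemma planeVec_apply (p : ℝ × ℝ) (k : Fin n) :
    planeVec i j p k = (if k = i then p.1 else 0) + (if k = j then p.2 else 0) := by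
  simp [planeVec, stdBasis_apply]

lemma planeVec_injective (hij : i ≠ j) : Function.Injective (planeVec (n := n) i j) := by
  intro p q h
  have hi := congrArg (· i) h
  have hj := congrArg (· j) h
  simp only [planeVec_apply, if_neg hij, if_neg hij.symm] at hi hj
  exact Prod.ext (by simpa using hi) (by simpa using hj)

lemma range_planeVec :
    Set.range (planeVec (n := n) i j) = span ℝ {stdBasis n i, stdBasis n j} := by
  ext x
  simp [mem_span_pair, planeVec]

lemma isShortRoot_iff {x : EuclideanSpace ℝ (Fin n)} :
    IsShortRoot n x ↔ ∃ k, ∃ σ ∈ ({1, -1} : Set ℝ), x = σ • stdBasis n k := by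
  simp [IsShortRoot, or_and_right, exists_or, neg_smul]

lemma isShortRoot_planeVec_iff (hij : i ≠ j) {p : ℝ × ℝ} :
    IsShortRoot n (planeVec i j p) ↔
      p ∈ ({1, -1} : Set ℝ) ×ˢ {0} ∪ {0} ×ˢ ({1, -1} : Set ℝ) := by
  constructor
  · rw [isShortRoot_iff]
    rintro ⟨k, σ, hσ, h⟩
    have hi := congrArg (· i) h
    have hj := congrArg (· j) h
    have hk := congrArg (· k) h
    simp only [planeVec_apply, PiLp.smul_apply, stdBasis_apply, smul_eq_mul] at hi hj hk
    obtain ⟨a, b⟩ := p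
    simp only [Set.mem_union, Set.mem_prod, Set.mem_singleton_iff]
    rcases hσ with rfl | rfl <;> split_ifs at hi hj hk <;> subst_vars <;> simp_all
  · obtain ⟨a, b⟩ := p
    simp only [Set.mem_union, Set.mem_prod, Set.mem_singleton_iff, isShortRoot_iff]
    rintro (⟨ha, rfl⟩ | ⟨rfl, hb⟩)
    · exact ⟨i, a, ha, by simp [planeVec]⟩
    · exact ⟨j, b, hb, by simp [planeVec]⟩

lemma isLongRoot_planeVec_iff (hij : i ≠ j) {p : ℝ × ℝ} :
    IsLongRoot n (planeVec i j p) ↔ p ∈ ({1, -1} : Set ℝ) ×ˢ ({1, -1} : Set ℝ) := by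
  constructor
  · rintro ⟨k, l, hkl, ε₁, ε₂, hε₁, hε₂, h⟩
    have happly (m : Fin n) :
        planeVec i j p m = (if m = k then ε₁ else 0) + (if m = l then ε₂ else 0) := by
      rw [h]; simp [stdBasis_apply]
    have hsupp {m : Fin n} (hm : planeVec i j p m ≠ 0) : m = i ∨ m = j := by
      by_contra! h'
      simp [planeVec_apply, h'.1, h'.2] at hm
    have hk : k = i ∨ k = j := hsupp <| by
      rw [happly, if_pos rfl, if_neg hkl]; rcases hε₁ with rfl | rfl <;> norm_num
    have hl : l = i ∨ l = j := hsupp <| by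
      rw [happly, if_pos rfl, if_neg hkl.symm]; rcases hε₂ with rfl | rfl <;> norm_num
    have ha := happly i
    have hb := happly j
    simp only [planeVec_apply, if_pos, if_neg hij, if_neg hij.symm, add_zero, zero_add] at ha hb
    rcases hk with rfl | rfl <;> rcases hl with rfl | rfl
    · exact absurd rfl hkl
    · simp only [if_pos, if_neg hkl, if_neg hkl.symm, add_zero, zero_add] at ha hb
      exact ⟨ha ▸ hε₁, hb ▸ hε₂⟩
    · simp only [if_pos, if_neg hkl, if_neg hkl.symm, add_zero, zero_add] at ha hb
      exact ⟨ha ▸ hε₂, hb ▸ hε₁⟩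
    · exact absurd rfl hkl
  · obtain ⟨a, b⟩ := p
    rintro ⟨ha, hb⟩
    exact ⟨i, j, hij, a, b, ha, hb, rfl⟩

lemma ncard_span_pair_inter (hij : i ≠ j) (A : Set (EuclideanSpace ℝ (Fin n))) :
    ((span ℝ {stdBasis n i, stdBasis n j} : Set _) ∩ A).ncard =
      (planeVec i j ⁻¹' A).ncard := by
  rw [← range_planeVec, ← Set.image_preimage_eq_range_inter,
    Set.ncard_image_of_injective _ (planeVec_injective hij)]

lemma ncard_signs_prod_signs : (({1, -1} : Set ℝ) ×ˢ ({1, -1} : Set ℝ)).ncard = 4 := by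
  rw [Set.ncard_prod, Set.ncard_pair (by norm_num)]

lemma ncard_short_pairs :
    (({1, -1} : Set ℝ) ×ˢ {0} ∪ {0} ×ˢ ({1, -1} : Set ℝ)).ncard = 4 := by
  rw [Set.ncard_union_eq, Set.ncard_prod, Set.ncard_prod, Set.ncard_pair (by norm_num),
    Set.ncard_singleton]
  exact Set.disjoint_left.2 fun p hp hq => by simp_all

lemma ncard_span_pair_inter_phiB (hij : i ≠ j) :
    let P : Set (EuclideanSpace ℝ (Fin n)) := span ℝ {stdBasis n i, stdBasis n j}
    (P ∩ PhiB n).ncard = 8 ∧ {x ∈ P ∩ PhiB n | IsLongRoot n x}.ncard = 4 ∧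
      {x ∈ P ∩ PhiB n | IsShortRoot n x}.ncard = 4 := by
  intro P
  have hshort : planeVec i j ⁻¹' {x | IsShortRoot n x} =
      ({1, -1} : Set ℝ) ×ˢ {0} ∪ {0} ×ˢ ({1, -1} : Set ℝ) :=
    Set.ext fun _ => isShortRoot_planeVec_iff hij
  have hlong :
      planeVec i j ⁻¹' {x | IsLongRoot n x} = ({1, -1} : Set ℝ) ×ˢ ({1, -1} : Set ℝ) :=
    Set.ext fun _ => isLongRoot_planeVec_iff hij
  have hsep {Q : EuclideanSpace ℝ (Fin n) → Prop} (hQ : ∀ x, Q x → x ∈ PhiB n) :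
      {x ∈ P ∩ PhiB n | Q x} = P ∩ {x | Q x} :=
    Set.ext fun x => ⟨fun h => ⟨h.1.1, h.2⟩, fun h => ⟨⟨h.1, hQ x h.2⟩, h.2⟩⟩
  refine ⟨?_, ?_, ?_⟩
  · rw [ncard_span_pair_inter hij, PhiB, Set.ofPred_or, Set.preimage_union, hshort, hlong,
      Set.ncard_union_eq, ncard_short_pairs, ncard_signs_prod_signs]
    refine Set.disjoint_left.2 fun p hp hq => ?_
    rcases hp with ⟨-, hp⟩ | ⟨hp, -⟩ <;> rw [Set.mem_singleton_iff] at hp <;>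
      norm_num [hp] at hq
  · rw [hsep fun _ => Or.inr, ncard_span_pair_inter hij, hlong, ncard_signs_prod_signs]
  · rw [hsep fun _ => Or.inl, ncard_span_pair_inter hij, hshort, ncard_short_pairs]

end StandardPlane

theorem stmt3_general (n : ℕ) (P : Submodule ℝ (EuclideanSpace ℝ (Fin n)))
    (hdim : Module.finrank ℝ P = 2)
    (hroots : 8 ≤ ((P : Set (EuclideanSpace ℝ (Fin n))) ∩ PhiB n).ncard) :
    (∃ i j : Fin n, i ≠ j ∧ P = Submodule.span ℝ {stdBasis n i, stdBasis n j}) ∧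
    ((P : Set (EuclideanSpace ℝ (Fin n))) ∩ PhiB n).ncard = 8 ∧
    {x ∈ (P : Set (EuclideanSpace ℝ (Fin n))) ∩ PhiB n | IsLongRoot n x}.ncard = 4 ∧
    {x ∈ (P : Set (EuclideanSpace ℝ (Fin n))) ∩ PhiB n | IsShortRoot n x}.ncard = 4 := by
  obtain ⟨i, j, hij, rfl⟩ := exists_eq_span_stdBasis_of_le_ncard hdim hroots
  exact ⟨⟨i, j, hij, rfl⟩, ncard_span_pair_inter_phiB hij⟩

/-- A plane in `ℝ^n` containing at least 8 roots of `Φ_{B_n}` is standard (spanned by two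
standard basis vectors) and contains exactly 8 roots, 4 long and 4 short. -/
theorem stmt3 (n : ℕ) (hn : 2 ≤ n) (P : Submodule ℝ (EuclideanSpace ℝ (Fin n)))
    (hdim : Module.finrank ℝ P = 2)
    (hroots : 8 ≤ ((P : Set (EuclideanSpace ℝ (Fin n))) ∩ PhiB n).ncard) :
    (∃ i j : Fin n, i ≠ j ∧ P = Submodule.span ℝ {stdBasis n i, stdBasis n j}) ∧
    ((P : Set (EuclideanSpace ℝ (Fin n))) ∩ PhiB n).ncard = 8 ∧
    {x ∈ (P : Set (EuclideanSpace ℝ (Fin n))) ∩ PhiB n | IsLongRoot n x}.ncard = 4 ∧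
    {x ∈ (P : Set (EuclideanSpace ℝ (Fin n))) ∩ PhiB n | IsShortRoot n x}.ncard = 4 :=
  stmt3_general n P hdim hroots
end

section
/- Let 0 < k_1 < k_2 < ⋯ < k_r and 0 < ℓ_1 < ℓ_2 < ⋯ < ℓ_s be integers, let n_1, …, n_r and m_1, …, m_s be positive integers with n = n_1 + ⋯ + n_r = m_1 + ⋯ + m_s, and suppose φ: ℝ^n → ℝ^n is a linear isomorphism mapping M_{k_1}^{n_1} × ⋯ × M_{k_r}^{n_r} onto M_{ℓ_1}^{m_1} × ⋯ × M_{ℓ_s}^{m_s}. Then φ maps the subset M_{k_1}^{n_1} × ⋯ × M_{k_{r−1}}^{n_{r−1}} × {0_{ℝ^{n_r}}} (vectors whose last n_r coordinates vanish) onto M_{ℓ_1}^{m_1} × ⋯ × M_{ℓ_{s−1}}^{m_{s−1}} × {0_{ℝ^{m_s}}}. -/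
/-!
For `P = Mprod a` with `K = max a`, both the scale `K` and the reduced set can be read off `P`
using only the linear structure of `ℝ^n`, so they are carried along by `φ`. First, `K` is the
largest `c` for which some nonzero `v` has `v, c • v ∈ P`. Second, the reduced set is the set of
`x ∈ P` with `x + K • v ∈ P` whenever `v, K • v ∈ P`: such `v` are supported on the top block,
where `x` vanishes, and conversely `v = ±eᵢ` for a top coordinate `i` forces `xᵢ ± K ∈ M_K`,
i.e. `xᵢ = 0`.
-/

/-- `M_d = {x ∈ ℤ : -d ≤ x ≤ d}`, as a subset of `ℝ`. -/
def Mset (d : ℕ) : Set ℝ :=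
  {x | ∃ k : ℤ, x = (k : ℝ) ∧ k.natAbs ≤ d}

/-- The product `M_{a 0} × ⋯ × M_{a (n-1)}` as a subset of `ℝ^n`.  A product of blocks
`M_{k_1}^{n_1} × ⋯ × M_{k_r}^{n_r}` with `0 < k_1 < ⋯ < k_r` corresponds to a monotone
positive coordinate-bound function `a : Fin n → ℕ`; then `k_r = a (n-1)` and the last
block consists of the coordinates `i` with `a i = a (n-1)`. -/
def Mprod {n : ℕ} (a : Fin n → ℕ) : Set (Fin n → ℝ) :=
  {x | ∀ i, x i ∈ Mset (a i)}

open Finset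

section LinearTransport

variable {R E F : Type*} [Semiring R] [AddCommMonoid E] [Module R E] [AddCommMonoid F] [Module R F]

def scalingDirections (P : Set E) (c : R) : Set E :=
  {v | v ∈ P ∧ c • v ∈ P}

def translationCore (P : Set E) (c : R) : Set E :=
  {x | x ∈ P ∧ ∀ v ∈ scalingDirections P c, x + c • v ∈ P}

theorem LinearEquiv.image_scalingDirections (φ : E ≃ₗ[R] F) (P : Set E) (c : R) :
    φ '' scalingDirections P c = scalingDirections (φ '' P) c := by
  ext y
  simp [φ.image_eq_preimage_symm, scalingDirections]

theorem LinearEquiv.image_translationCore (φ : E ≃ₗ[R] F) (P : Set E) (c : R) :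
    φ '' translationCore P c = translationCore (φ '' P) c := by
  ext y
  rw [translationCore, translationCore, ← φ.image_scalingDirections]
  constructor
  · rintro ⟨x, ⟨hx, hcore⟩, rfl⟩
    refine ⟨Set.mem_image_of_mem φ hx, ?_⟩
    rintro _ ⟨v, hv, rfl⟩
    rw [← map_smul, ← map_add]
    exact Set.mem_image_of_mem φ (hcore v hv)
  · rintro ⟨⟨x, hx, rfl⟩, hcore⟩
    refine ⟨x, ⟨hx, fun v hv => ?_⟩, rfl⟩
    obtain ⟨w, hw, hwx⟩ := hcore (φ v) (Set.mem_image_of_mem φ hv)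
    rw [← map_smul, ← map_add] at hwx
    exact φ.injective hwx ▸ hw

end LinearTransport

lemma zero_mem_Mset (d : ℕ) : (0 : ℝ) ∈ Mset d := ⟨0, by simp⟩

lemma natCast_mem_Mset {m d : ℕ} (h : m ≤ d) : (m : ℝ) ∈ Mset d := ⟨m, by simp, by simpa⟩

lemma neg_mem_Mset {d : ℕ} {x : ℝ} (hx : x ∈ Mset d) : -x ∈ Mset d := by
  obtain ⟨k, rfl, hk⟩ := hx
  exact ⟨-k, by simp, by simpa⟩

lemma abs_le_of_mem_Mset {d : ℕ} {x : ℝ} (hx : x ∈ Mset d) : |x| ≤ d := by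
  obtain ⟨k, rfl, hk⟩ := hx
  rw [← Int.cast_abs, Int.abs_eq_natAbs]
  exact_mod_cast hk

lemma eq_zero_of_mul_mem_Mset {d e c : ℕ} {x : ℝ} (hx : x ∈ Mset d) (hcx : (c : ℝ) * x ∈ Mset e)
    (hec : e < c) : x = 0 := by
  obtain ⟨k, rfl, -⟩ := hx
  by_contra hk
  have h1 : (1 : ℝ) ≤ |(k : ℝ)| := by
    rw [← Int.cast_abs]; exact_mod_cast Int.one_le_abs (by exact_mod_cast hk)
  have h2 := abs_le_of_mem_Mset hcx
  rw [abs_mul, Nat.abs_cast] at h2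
  have hec' : (e : ℝ) < c := by exact_mod_cast hec
  nlinarith

lemma eq_zero_of_add_mem_Mset_of_sub_mem_Mset {c : ℕ} {x : ℝ} (hadd : x + c ∈ Mset c)
    (hsub : x - c ∈ Mset c) : x = 0 := by
  have h1 := abs_le_of_mem_Mset hadd
  have h2 := abs_le_of_mem_Mset hsub
  rw [abs_le] at h1 h2
  linarith [h1.2, h2.1]

section Mprod

variable {n : ℕ} {a : Fin n → ℕ}

lemma single_mem_Mprod_iff {i : Fin n} {t : ℝ} : Pi.single i t ∈ Mprod a ↔ t ∈ Mset (a i) := by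
  refine ⟨fun h => by simpa using h i, fun ht j => ?_⟩
  rcases eq_or_ne j i with rfl | hj
  · simpa using ht
  · simpa [hj] using zero_mem_Mset (a j)

lemma single_mem_scalingDirections_Mprod_iff {i : Fin n} {t c : ℝ} :
    Pi.single i t ∈ scalingDirections (Mprod a) c ↔ t ∈ Mset (a i) ∧ c * t ∈ Mset (a i) := by
  rw [scalingDirections, Set.mem_ofPred_eq, ← Pi.single_smul, smul_eq_mul, single_mem_Mprod_iff,
    single_mem_Mprod_iff]

lemma scalingDirections_Mprod_subset_zero_iff {c : ℕ} (hc : 0 < c) :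
    scalingDirections (Mprod a) (c : ℝ) ⊆ {0} ↔ ∀ i, a i < c := by
  constructor
  · intro h i
    by_contra! hi
    have hsingle : Pi.single i (1 : ℝ) ∈ scalingDirections (Mprod a) (c : ℝ) := by
      refine ⟨single_mem_Mprod_iff.2 ⟨1, by simp, by omega⟩, ?_⟩
      rw [← Pi.single_smul, smul_eq_mul, mul_one]
      exact single_mem_Mprod_iff.2 ⟨c, by simp, by simpa using hi⟩
    simpa using h hsingle
  · rintro h v ⟨hv, hcv⟩
    funext j
    exact eq_zero_of_mul_mem_Mset (hv j) (hcv j) (h j)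

lemma le_sup_iff_not_scalingDirections_Mprod_subset_zero {c : ℕ} (hc : 0 < c) :
    c ≤ univ.sup a ↔ ¬ scalingDirections (Mprod a) (c : ℝ) ⊆ {0} := by
  simp [Finset.le_sup_iff hc, scalingDirections_Mprod_subset_zero_iff hc]

theorem sup_eq_of_image_Mprod_eq {b : Fin n → ℕ} (φ : (Fin n → ℝ) ≃ₗ[ℝ] (Fin n → ℝ))
    (hφ : φ '' Mprod a = Mprod b) : univ.sup a = univ.sup b := by
  refine eq_of_forall_le_iff fun c => ?_
  rcases Nat.eq_zero_or_pos c with rfl | hc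
  · simp
  rw [le_sup_iff_not_scalingDirections_Mprod_subset_zero hc,
    le_sup_iff_not_scalingDirections_Mprod_subset_zero hc, ← hφ, ← φ.image_scalingDirections]
  simp [Set.subset_def]

theorem translationCore_Mprod {K : ℕ} (hK : ∀ i, a i ≤ K) (hK0 : 0 < K) :
    translationCore (Mprod a) (K : ℝ) =
      {x | ∀ i, if a i = K then x i = 0 else x i ∈ Mset (a i)} := by
  have hone : (1 : ℝ) ∈ Mset K := by exact_mod_cast natCast_mem_Mset hK0
  ext x
  constructor
  · rintro ⟨hx, hcore⟩ i
    split_ifs with hi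
    · have hplus : Pi.single i (1 : ℝ) ∈ scalingDirections (Mprod a) (K : ℝ) :=
        single_mem_scalingDirections_Mprod_iff.2
          ⟨hi ▸ hone, by simpa [hi] using natCast_mem_Mset le_rfl⟩
      have hminus : Pi.single i (-1 : ℝ) ∈ scalingDirections (Mprod a) (K : ℝ) :=
        single_mem_scalingDirections_Mprod_iff.2
          ⟨hi ▸ neg_mem_Mset hone, by simpa [hi] using neg_mem_Mset (natCast_mem_Mset le_rfl)⟩
      apply eq_zero_of_add_mem_Mset_of_sub_mem_Mset (c := K)
      · simpa [hi] using hcore _ hplus i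
      · simpa [hi, sub_eq_add_neg] using hcore _ hminus i
    · exact hx i
  · intro hx
    have hxi : ∀ i, a i ≠ K → x i ∈ Mset (a i) := fun i hi => by simpa [hi] using hx i
    have hx0 : ∀ i, a i = K → x i = 0 := fun i hi => by simpa [hi] using hx i
    refine ⟨fun i => ?_, fun v ⟨hv, hKv⟩ i => ?_⟩
    · by_cases hi : a i = K
      · simpa [hx0 i hi] using zero_mem_Mset (a i)
      · exact hxi i hi
    · by_cases hi : a i = K
      · simpa [hx0 i hi] using hKv i
      · have hvi : v i = 0 := eq_zero_of_mul_mem_Mset (hv i) (hKv i) (lt_of_le_of_ne (hK i) hi)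
        simpa [hvi] using hxi i hi

end Mprod

/-- If a linear isomorphism of `ℝ^n` maps `M_{k_1}^{n_1} × ⋯ × M_{k_r}^{n_r}` onto
`M_{ℓ_1}^{m_1} × ⋯ × M_{ℓ_s}^{m_s}` (both encoded by monotone positive coordinate-bound
functions `a`, `b`), then `φ` maps `M_{k_1}^{n_1} × ⋯ × M_{k_{r-1}}^{n_{r-1}} × {0}`
onto `M_{ℓ_1}^{m_1} × ⋯ × M_{ℓ_{s-1}}^{m_{s-1}} × {0}`. -/
theorem stmt10 (n : ℕ) (hn : 0 < n) (a b : Fin n → ℕ)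
    (ha : Monotone a) (hb : Monotone b) (hapos : ∀ i, 0 < a i) (hbpos : ∀ i, 0 < b i)
    (φ : (Fin n → ℝ) ≃ₗ[ℝ] (Fin n → ℝ))
    (hφ : φ '' Mprod a = Mprod b) :
    φ '' {x | ∀ i, if a i = a ⟨n - 1, by omega⟩ then x i = 0 else x i ∈ Mset (a i)} =
      {x | ∀ i, if b i = b ⟨n - 1, by omega⟩ then x i = 0 else x i ∈ Mset (b i)} := by
  set top : Fin n := ⟨n - 1, by omega⟩
  have le_top : ∀ i : Fin n, i ≤ top := fun i => Fin.le_def.2 (Nat.le_sub_one_of_lt i.isLt)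
  have hsup : ∀ f : Fin n → ℕ, Monotone f → univ.sup f = f top := fun f hf =>
    le_antisymm (Finset.sup_le fun i _ => hf (le_top i)) (le_sup (mem_univ top))
  have htop : a top = b top := by
    rw [← hsup a ha, ← hsup b hb, sup_eq_of_image_Mprod_eq φ hφ]
  rw [← translationCore_Mprod (fun i => ha (le_top i)) (hapos top),
    ← translationCore_Mprod (fun i => hb (le_top i)) (hbpos top), φ.image_translationCore, hφ, htop]
end
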